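/- arXiv:0707.0311 — 6 statements merged into one kernel-verified Lean document; each statement's English description precedes it below -/
import Mathlib

section
/- Let P be a finite set of points in the plane and let H_A, H_B be two closed half-planes. Set A = P ∩ H_A and B = P ∩ H_B. Then the set difference (convex hull of A) \ (convex hull of B) is connected (possibly empty). -/
/-!
Split `A` along the boundary line of `H_B` into the part `A₁` inside `H_B` and the part `A₂`
strictly outside. Then `A₁ ⊆ conv B ⊆ H_B`, while `conv A₂` misses `H_B`, hence `conv B`.
Every `x ∈ conv A \ conv B` lies on a segment `[p, q]` with `p ∈ conv A₁` and `q ∈ conv A₂`;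
since `p ∈ conv B`, convexity of `conv B` keeps the whole subsegment `[x, q]` outside `conv B`.
So `conv A \ conv B` is the union of the convex set `conv A₂` with segments attached to it.
-/

section

variable {E : Type*} [AddCommGroup E] [Module ℝ E]

lemma Convex.disjoint_segment_of_mem_segment {L : Set E} (hL : Convex ℝ L) {p x q : E}
    (hp : p ∈ L) (hx : x ∉ L) (hxs : x ∈ segment ℝ p q) : Disjoint (segment ℝ x q) L := by
  refine Set.disjoint_left.2 fun w hw hwL => hx ?_
  have hpxw : Wbtw ℝ p x w :=
    (mem_segment_iff_wbtw.1 hxs).trans_right_left (mem_segment_iff_wbtw.1 hw)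
  exact hL.segment_subset hp hwL hpxw.mem_segment

lemma exists_segment_subset_convexHull_union_diff {A₁ A₂ L : Set E} (hL : Convex ℝ L)
    (hA₁ : A₁ ⊆ L) {x : E} (hx : x ∈ convexHull ℝ (A₁ ∪ A₂) \ L) :
    ∃ q ∈ convexHull ℝ A₂, segment ℝ x q ⊆ convexHull ℝ (A₁ ∪ A₂) \ L := by
  rcases A₁.eq_empty_or_nonempty with rfl | hA₁ne
  · rw [Set.empty_union] at hx ⊢
    exact ⟨x, hx.1, by rw [segment_same]; exact Set.singleton_subset_iff.2 hx⟩
  rcases A₂.eq_empty_or_nonempty with rfl | hA₂ne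
  · rw [Set.union_empty] at hx
    exact absurd (convexHull_min hA₁ hL hx.1) hx.2
  obtain ⟨p, hp, q, hq, hxpq⟩ :=
    mem_convexJoin.1 ((convexHull_union (𝕜 := ℝ) hA₁ne hA₂ne) ▸ hx.1)
  have hqA : q ∈ convexHull ℝ (A₁ ∪ A₂) := convexHull_mono Set.subset_union_right hq
  refine ⟨q, hq, fun w hw => ⟨(convex_convexHull ℝ _).segment_subset hx.1 hqA hw, ?_⟩⟩
  exact Set.disjoint_left.1
    (hL.disjoint_segment_of_mem_segment (convexHull_min hA₁ hL hp) hx.2 hxpq) hw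

lemma isPreconnected_convexHull_union_diff [TopologicalSpace E] [ContinuousAdd E]
    [ContinuousSMul ℝ E] {A₁ A₂ L : Set E} (hL : Convex ℝ L) (hA₁ : A₁ ⊆ L)
    (hA₂ : Disjoint (convexHull ℝ A₂) L) :
    IsPreconnected (convexHull ℝ (A₁ ∪ A₂) \ L) := by
  set S := convexHull ℝ (A₁ ∪ A₂) \ L
  have hA₂S : convexHull ℝ A₂ ⊆ S := fun y hy =>
    ⟨convexHull_mono Set.subset_union_right hy, Set.disjoint_left.1 hA₂ hy⟩
  rcases S.eq_empty_or_nonempty with hS | ⟨x₀, hx₀⟩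
  · rw [hS]; exact isPreconnected_empty
  obtain ⟨q₀, hq₀, -⟩ := exists_segment_subset_convexHull_union_diff hL hA₁ hx₀
  refine isPreconnected_of_forall q₀ fun y hy => ?_
  obtain ⟨q, hq, hyq⟩ := exists_segment_subset_convexHull_union_diff hL hA₁ hy
  refine ⟨segment ℝ y q ∪ convexHull ℝ A₂, Set.union_subset hyq hA₂S, Or.inr hq₀,
    Or.inl (left_mem_segment ℝ y q), ?_⟩
  exact IsPreconnected.union q (right_mem_segment ℝ y q) hq
    (convex_segment y q).isPreconnected (convex_convexHull ℝ A₂).isPreconnected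

lemma isPreconnected_convexHull_diff_convexHull [TopologicalSpace E] [ContinuousAdd E]
    [ContinuousSMul ℝ E] {f : E → ℝ} (hf : IsLinearMap ℝ f) {d : ℝ} {A B : Set E}
    (hAB : {p ∈ A | f p ≤ d} ⊆ B) (hB : B ⊆ {p | f p ≤ d}) :
    IsPreconnected (convexHull ℝ A \ convexHull ℝ B) := by
  have hsplit : A = {p ∈ A | f p ≤ d} ∪ {p ∈ A | d < f p} := by
    ext p; by_cases h : f p ≤ d <;> simp [h, not_le.1]
  have hBd : convexHull ℝ B ⊆ {p | f p ≤ d} := convexHull_min hB (convex_halfSpace_le hf d)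
  have hA₂ : convexHull ℝ {p ∈ A | d < f p} ⊆ {p | d < f p} :=
    convexHull_min (fun p hp => hp.2) (convex_halfSpace_gt hf d)
  rw [hsplit]
  refine isPreconnected_convexHull_union_diff (convex_convexHull ℝ B)
    (hAB.trans (subset_convexHull ℝ B))
    (Set.disjoint_left.2 fun p hp hpB => (show d < f p from hA₂ hp).not_ge (hBd hpB))

end

theorem stmt0_general (P : Finset (ℝ × ℝ))
    (u : ℝ × ℝ) (c : ℝ)
    (v : ℝ × ℝ) (d : ℝ)
    (A B : Set (ℝ × ℝ))
    (hA : A = {p : ℝ × ℝ | p ∈ P ∧ u.1 * p.1 + u.2 * p.2 ≤ c})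
    (hB : B = {p : ℝ × ℝ | p ∈ P ∧ v.1 * p.1 + v.2 * p.2 ≤ d}) :
    IsPreconnected (convexHull ℝ A \ convexHull ℝ B) := by
  have hf : IsLinearMap ℝ fun p : ℝ × ℝ => v.1 * p.1 + v.2 * p.2 :=
    ⟨fun p q => by simp only [Prod.fst_add, Prod.snd_add]; ring,
      fun a p => by simp only [Prod.smul_fst, Prod.smul_snd, smul_eq_mul]; ring⟩
  subst hA hB
  exact isPreconnected_convexHull_diff_convexHull hf (fun p hp => ⟨hp.1.1, hp.2⟩)
    (fun p hp => hp.2)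

/-- For a finite planar point set `P` and two closed half-planes
`H_A = {x | ⟨x,u⟩ ≤ c}` and `H_B = {x | ⟨x,v⟩ ≤ d}`, with `A = P ∩ H_A` and
`B = P ∩ H_B`, the set `conv(A) \ conv(B)` is connected (possibly empty). -/
theorem stmt0 (P : Finset (ℝ × ℝ))
    (u : ℝ × ℝ) (hu : u ≠ 0) (c : ℝ)
    (v : ℝ × ℝ) (hv : v ≠ 0) (d : ℝ)
    (A B : Set (ℝ × ℝ))
    (hA : A = {p : ℝ × ℝ | p ∈ P ∧ u.1 * p.1 + u.2 * p.2 ≤ c})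
    (hB : B = {p : ℝ × ℝ | p ∈ P ∧ v.1 * p.1 + v.2 * p.2 ≤ d}) :
    IsPreconnected (convexHull ℝ A \ convexHull ℝ B) :=
  stmt0_general P u c v d A B hA hB
end

section
/- Let A be a finite set of points in the plane, let x be a point in conv(A) but not in conv(B) for some convex set B. Then there exists a point a ∈ A with a ∉ B such that the line segment [x, a] is entirely contained in conv(A) \ conv(B). -/
/-!
The points `y` whose segment `[x, y]` meets `B` form a convex set: for `x ∉ B` it is the
shadow `x + [1, ∞) • (B - x)` cast by `B` from a light source at `x`, and a convex set of
positive scalars times a convex set is convex. If this set contained every point of `A`, it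
would contain `conv(A) ∋ x`, so `[x, x] = {x}` would meet `B`.
-/

open Set Pointwise

variable {𝕜 E : Type*} [Field 𝕜] [LinearOrder 𝕜] [IsStrictOrderedRing 𝕜]
  [AddCommGroup E] [Module 𝕜 E]

theorem Convex.smul_of_subset_Ioi {s : Set 𝕜} {t : Set E} (hs : Convex 𝕜 s)
    (hs₀ : s ⊆ Ioi 0) (ht : Convex 𝕜 t) : Convex 𝕜 (s • t) := by
  rintro _ ⟨c, hc, y, hy, rfl⟩ _ ⟨d, hd, z, hz, rfl⟩ a b ha hb hab
  have he : 0 < a * c + b * d := hs₀ (hs hc hd ha hb hab)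
  refine ⟨a * c + b * d, hs hc hd ha hb hab, _,
    convex_iff_div.1 ht hy hz (mul_nonneg ha (hs₀ hc).le) (mul_nonneg hb (hs₀ hd).le) he, ?_⟩
  simp only [smul_add, smul_smul, mul_div_cancel₀ _ he.ne']

theorem setOf_segment_inter_nonempty_eq {B : Set E} {x : E} (hx : x ∉ B) :
    {y | (segment 𝕜 x y ∩ B).Nonempty} = x +ᵥ Ici (1 : 𝕜) • (-x +ᵥ B) := by
  ext y
  simp only [mem_ofPred_eq, segment_eq_image', mem_vadd_set, mem_smul, vadd_eq_add]
  constructor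
  · rintro ⟨_, ⟨t, ⟨ht₀, ht₁⟩, rfl⟩, hpB⟩
    have ht : t ≠ 0 := by rintro rfl; simp_all
    refine ⟨y - x, ⟨t⁻¹, one_le_inv₀ (ht₀.lt_of_ne' ht) |>.2 ht₁, _, ⟨_, hpB, rfl⟩, ?_⟩, by abel⟩
    rw [neg_add_cancel_left, smul_smul, inv_mul_cancel₀ ht, one_smul]
  · rintro ⟨_, ⟨r, hr, _, ⟨b, hb, rfl⟩, rfl⟩, rfl⟩
    have hr₀ : (0 : 𝕜) < r := zero_lt_one.trans_le hr
    refine ⟨b, ⟨r⁻¹, ⟨inv_nonneg.2 hr₀.le, inv_le_one_of_one_le₀ hr⟩, ?_⟩, hb⟩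
    simp only [add_sub_cancel_left, smul_smul, inv_mul_cancel₀ hr₀.ne', one_smul,
      add_neg_cancel_left]

theorem Convex.setOf_segment_inter_nonempty {B : Set E} (hB : Convex 𝕜 B) (x : E) :
    Convex 𝕜 {y | (segment 𝕜 x y ∩ B).Nonempty} := by
  by_cases hx : x ∈ B
  · convert convex_univ
    exact eq_univ_of_forall fun y => ⟨x, left_mem_segment 𝕜 x y, hx⟩
  · rw [setOf_segment_inter_nonempty_eq hx]
    exact ((convex_Ici 1).smul_of_subset_Ioi (fun r hr => zero_lt_one.trans_le hr)
      (hB.vadd (-x))).vadd x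

theorem exists_disjoint_segment_of_mem_convexHull {A B : Set E} (hB : Convex 𝕜 B) {x : E}
    (hxA : x ∈ convexHull 𝕜 A) (hxB : x ∉ B) : ∃ a ∈ A, Disjoint (segment 𝕜 x a) B := by
  by_contra! h
  obtain ⟨p, hp, hpB⟩ := convexHull_min (fun a ha => not_disjoint_iff_nonempty_inter.1 (h a ha))
    (hB.setOf_segment_inter_nonempty x) hxA
  rw [segment_same, mem_singleton_iff] at hp
  exact hxB (hp ▸ hpB)

/-- If `x ∈ conv(A)` for a finite planar set `A` and `x ∉ conv(B) = B`
for a convex set `B`, then there is `a ∈ A` with `a ∉ B` such that the segment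
`[x,a]` lies entirely in `conv(A) \ conv(B)`. -/
theorem stmt1 (A : Finset (ℝ × ℝ)) (B : Set (ℝ × ℝ)) (hB : Convex ℝ B)
    (x : ℝ × ℝ) (hxA : x ∈ convexHull ℝ (A : Set (ℝ × ℝ)))
    (hxB : x ∉ convexHull ℝ B) :
    ∃ a ∈ A, a ∉ B ∧
      segment ℝ x a ⊆ convexHull ℝ (A : Set (ℝ × ℝ)) \ convexHull ℝ B := by
  rw [hB.convexHull_eq] at hxB ⊢
  obtain ⟨a, ha, hdisj⟩ := exists_disjoint_segment_of_mem_convexHull hB hxA hxB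
  refine ⟨a, ha, hdisj.notMem_of_mem_left (right_mem_segment ℝ x a), fun p hp => ⟨?_, ?_⟩⟩
  · exact (convex_convexHull ℝ _).segment_subset hxA (subset_convexHull ℝ _ ha) hp
  · exact hdisj.notMem_of_mem_left hp
end

section
/- Let ℓ₁, …, ℓ_n be non-vertical lines in the plane arranged in strictly increasing order of slopes, and let P be a set of points. Suppose that for every 1 ≤ i < n, P strongly separates ℓ_i and ℓ_{i+1}. Then for every 1 ≤ i < j ≤ n, P strongly separates ℓ_i and ℓ_j. -/
/-! Call `p` *above `ℓ` and below `ℓ'`* if it lies strictly above `ℓ` and strictly below `ℓ'`.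
Let `x` be above `ℓ₁` and below `ℓ₂`, and `u` above `ℓ₂` and below `ℓ₃`. If `x` is not below `ℓ₃`,
then `ℓ₃ - ℓ₂` is negative at `x` and positive at `u`. When the slope of `ℓ₂` lies strictly between
those of `ℓ₁` and `ℓ₃`, the affine functions `ℓ₃ - ℓ₂` and `ℓ₂ - ℓ₁` are monotone in the same
direction, so `ℓ₂ - ℓ₁`, positive at `x`, is positive at `u` too: `u` is above `ℓ₁` and below `ℓ₃`.
Strong separation is this one-sided relation in both directions, hence transitive along lines of
increasing slope, and the theorem follows by chaining consecutive pairs. -/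
/-- `P` strongly separates the non-vertical lines `y = a₁ x + b₁` and `y = a₂ x + b₂`:
there are `x, y ∈ P` with `x` strictly above the first and strictly below the second,
and `y` strictly above the second and strictly below the first. -/
def StronglySeparates (P : Set (ℝ × ℝ)) (a₁ b₁ a₂ b₂ : ℝ) : Prop :=
  ∃ x ∈ P, ∃ y ∈ P,
    x.2 > a₁ * x.1 + b₁ ∧ x.2 < a₂ * x.1 + b₂ ∧
    y.2 > a₂ * y.1 + b₂ ∧ y.2 < a₁ * y.1 + b₁

def MeetsAboveBelow (P : Set (ℝ × ℝ)) (a₁ b₁ a₂ b₂ : ℝ) : Prop :=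
  ∃ p ∈ P, a₁ * p.1 + b₁ < p.2 ∧ p.2 < a₂ * p.1 + b₂

theorem stronglySeparates_iff {P : Set (ℝ × ℝ)} {a₁ b₁ a₂ b₂ : ℝ} :
    StronglySeparates P a₁ b₁ a₂ b₂ ↔
      MeetsAboveBelow P a₁ b₁ a₂ b₂ ∧ MeetsAboveBelow P a₂ b₂ a₁ b₁ :=
  ⟨fun ⟨x, hx, y, hy, hx₁, hx₂, hy₂, hy₁⟩ => ⟨⟨x, hx, hx₁, hx₂⟩, ⟨y, hy, hy₂, hy₁⟩⟩,
    fun ⟨⟨x, hx, hx₁, hx₂⟩, ⟨y, hy, hy₂, hy₁⟩⟩ => ⟨x, hx, y, hy, hx₁, hx₂, hy₂, hy₁⟩⟩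

theorem MeetsAboveBelow.trans {P : Set (ℝ × ℝ)} {a₁ b₁ a₂ b₂ a₃ b₃ : ℝ}
    (h₁₂ : MeetsAboveBelow P a₁ b₁ a₂ b₂) (hslope : 0 < (a₂ - a₁) * (a₃ - a₂))
    (h₂₃ : MeetsAboveBelow P a₂ b₂ a₃ b₃) : MeetsAboveBelow P a₁ b₁ a₃ b₃ := by
  obtain ⟨x, hx, hx₁, hx₂⟩ := h₁₂
  obtain ⟨u, hu, hu₂, hu₃⟩ := h₂₃
  by_cases hx₃ : x.2 < a₃ * x.1 + b₃
  · exact ⟨x, hx, hx₁, hx₃⟩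
  refine ⟨u, hu, ?_, hu₃⟩
  have h₃₂ : 0 < (a₃ - a₂) * (u.1 - x.1) := by linarith
  have h₂₁ : 0 < (a₂ - a₁) * (u.1 - x.1) := by nlinarith [mul_pos hslope h₃₂, sq_nonneg (a₃ - a₂)]
  linarith

theorem StronglySeparates.trans {P : Set (ℝ × ℝ)} {a₁ b₁ a₂ b₂ a₃ b₃ : ℝ}
    (h₁₂ : StronglySeparates P a₁ b₁ a₂ b₂) (hslope : 0 < (a₂ - a₁) * (a₃ - a₂))
    (h₂₃ : StronglySeparates P a₂ b₂ a₃ b₃) : StronglySeparates P a₁ b₁ a₃ b₃ := by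
  rw [stronglySeparates_iff] at *
  have hslope' : 0 < (a₂ - a₃) * (a₁ - a₂) := by linarith
  exact ⟨h₁₂.1.trans hslope h₂₃.1, h₂₃.2.trans hslope' h₁₂.2⟩

theorem Fin.rel_of_forall_rel_succ_of_lt {n : ℕ} (r : Fin n → Fin n → Prop)
    (htrans : ∀ i j k : Fin n, i < j → j < k → r i j → r j k → r i k)
    (hsucc : ∀ (i : Fin n) (hi : (i : ℕ) + 1 < n), r i ⟨i + 1, hi⟩) {i j : Fin n} (hij : i < j) :
    r i j := by
  obtain ⟨j, hj⟩ := j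
  change (i : ℕ) + 1 ≤ j at hij
  induction j, hij using Nat.le_induction with
  | base => exact hsucc i hj
  | succ k hik ih =>
    exact htrans i ⟨k, by omega⟩ _ (Fin.lt_def.2 hik) (Fin.lt_def.2 k.lt_succ_self) (ih (by omega))
      (hsucc ⟨k, by omega⟩ hj)

/-- If lines `ℓ₁, …, ℓ_n` have strictly increasing slopes and `P`
strongly separates each consecutive pair, then `P` strongly separates every pair. -/
theorem stmt2 (n : ℕ) (a b : Fin n → ℝ) (hmono : StrictMono a)
    (P : Set (ℝ × ℝ))
    (hconsec : ∀ i : Fin n, ∀ h : (i : ℕ) + 1 < n,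
      StronglySeparates P (a i) (b i) (a ⟨i + 1, h⟩) (b ⟨i + 1, h⟩)) :
    ∀ i j : Fin n, i < j → StronglySeparates P (a i) (b i) (a j) (b j) := by
  intro i j hij
  refine Fin.rel_of_forall_rel_succ_of_lt (fun i j => StronglySeparates P (a i) (b i) (a j) (b j))
    (fun _ _ _ hkl hlm hsep₁ hsep₂ => hsep₁.trans ?_ hsep₂) hconsec hij
  exact mul_pos (sub_pos.2 (hmono hkl)) (sub_pos.2 (hmono hlm))
end

section
/- Let A and B be two finite point sets in general position in the plane such that neither conv(A) ⊆ conv(B) nor conv(B) ⊆ conv(A), and such that both conv(A) \ conv(B) and conv(B) \ conv(A) are connected. Let x₀, …, x_{k−1} be the vertices of conv(A ∪ B) in counterclockwise order. Then the set of indices i with x_i ∈ A \ conv(B) forms a set of cyclically consecutive indices modulo k (and similarly for B \ conv(A)). -/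
/-!
If the vertices in `A \ conv B` did not form a cyclic interval, there would be two vertices
`x_b, x_d ∉ A \ conv B` separating, in the cyclic order, two vertices in `A \ conv B`. Both `x_b`
and `x_d` lie in `conv B`. Since they are extreme points of `conv (A ∪ B)`, the line through them
meets `conv (A ∪ B)` only in the segment `[x_b, x_d] ⊆ conv B`, so it misses the connected set
`conv A \ conv B`. But, the polygon being convex, the chord `x_b x_d` has the two separated
vertices strictly on opposite sides, and they both lie in `conv A \ conv B`.
-/

/-- The planar cross product. -/
def cross2 (u v : ℝ × ℝ) : ℝ := u.1 * v.2 - u.2 * v.1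

open Set

lemma cross2_sub_rotate (a b c : ℝ × ℝ) :
    cross2 (b - a) (c - a) = cross2 (c - b) (a - b) := by
  simp only [cross2, Prod.fst_sub, Prod.snd_sub]; ring

lemma cross2_comm_neg (u v : ℝ × ℝ) : cross2 u v = -cross2 v u := by
  simp only [cross2]; ring

lemma cross2_plucker (v a b c : ℝ × ℝ) :
    cross2 v b * cross2 a c = cross2 v a * cross2 b c + cross2 v c * cross2 a b := by
  simp only [cross2]; ring

lemma exists_smul_eq_of_cross2_eq_zero {w z : ℝ × ℝ} (hw : w ≠ 0) (h : cross2 w z = 0) :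
    ∃ r : ℝ, r • w = z := by
  simp only [cross2, sub_eq_zero] at h
  by_cases h₁ : w.1 = 0
  · have h₂ : w.2 ≠ 0 := fun h₂ => hw (Prod.ext h₁ h₂)
    refine ⟨z.2 / w.2, Prod.ext ?_ ?_⟩ <;> simp only [Prod.smul_fst, Prod.smul_snd, smul_eq_mul]
    · rw [h₁, zero_mul] at h
      rw [h₁, mul_zero, eq_comm]
      exact (mul_eq_zero.mp h.symm).resolve_left h₂
    · field_simp
  · refine ⟨z.1 / w.1, Prod.ext ?_ ?_⟩ <;> simp only [Prod.smul_fst, Prod.smul_snd, smul_eq_mul]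
    · field_simp
    · field_simp; linarith

lemma mem_affineSpan_pair_of_cross2_eq_zero {u v p : ℝ × ℝ} (huv : u ≠ v)
    (h : cross2 (v - u) (p - u) = 0) : p ∈ line[ℝ, u, v] := by
  rw [← vsub_vadd p u, vadd_left_mem_affineSpan_pair]
  exact exists_smul_eq_of_cross2_eq_zero (sub_ne_zero.mpr huv.symm) h

lemma cross2_pos_of_fan (v : ℕ → ℝ × ℝ) (n : ℕ)
    (hfirst : ∀ t, 2 ≤ t → t ≤ n → 0 < cross2 (v 1) (v t))
    (hstep : ∀ t, 1 ≤ t → t < n → 0 < cross2 (v t) (v (t + 1))) :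
    ∀ u s, 1 ≤ u → u < s → s ≤ n → 0 < cross2 (v u) (v s) := by
  intro u s hu hus hsn
  induction s, hus using Nat.le_induction with
  | base => exact hstep u hu (by omega)
  | succ s hus ih =>
    have h1u : 0 ≤ cross2 (v 1) (v u) := by
      rcases hu.eq_or_lt with rfl | hu
      · simp [cross2, mul_comm]
      · exact (hfirst u hu (by omega)).le
    have key := cross2_plucker (v 1) (v u) (v s) (v (s + 1))
    have hprod : 0 < cross2 (v 1) (v s) * cross2 (v u) (v (s + 1)) := by
      rw [key]
      exact add_pos_of_nonneg_of_pos (mul_nonneg h1u (hstep s (by omega) (by omega)).le)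
        (mul_pos (hfirst (s + 1) (by omega) hsn) (ih (by omega)))
    exact pos_of_mul_pos_right hprod (hfirst s (by omega) (by omega)).le

/-- The line through two extreme points of `K` meets `K` only in the segment between them,
which lies in `C`. -/
lemma mem_of_mem_affineSpan_pair_of_mem_extremePoints {E : Type*} [AddCommGroup E]
    [Module ℝ E] {K C : Set E} (hC : Convex ℝ C) {u v p : E} (hu : u ∈ K.extremePoints ℝ)
    (hv : v ∈ K.extremePoints ℝ) (huC : u ∈ C) (hvC : v ∈ C) (huv : u ≠ v) (hpK : p ∈ K)
    (hp : p ∈ line[ℝ, u, v]) : p ∈ C := by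
  have huK := (mem_extremePoints_iff_forall_segment.mp hu).2
  have hvK := (mem_extremePoints_iff_forall_segment.mp hv).2
  rcases (collinear_insert_of_mem_affineSpan_pair hp).wbtw_or_wbtw_or_wbtw with h | h | h
  · rcases huK p hpK v hv.1 h.mem_segment with rfl | rfl
    exacts [huC, absurd rfl huv]
  · rcases hvK u hu.1 p hpK h.mem_segment with rfl | rfl
    exacts [absurd rfl huv, hvC]
  · exact hC.segment_subset hvC huC h.mem_segment

lemma IsPreconnected.not_straddles_chord {K C D : Set (ℝ × ℝ)} (hD : IsPreconnected D)
    (hC : Convex ℝ C) (hDK : D ⊆ K) (hDC : Disjoint D C) {u v p q : ℝ × ℝ}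
    (hu : u ∈ K.extremePoints ℝ) (hv : v ∈ K.extremePoints ℝ) (huC : u ∈ C) (hvC : v ∈ C)
    (hp : p ∈ D) (hq : q ∈ D) (hpneg : cross2 (v - u) (p - u) < 0)
    (hqpos : 0 < cross2 (v - u) (q - u)) : False := by
  have huv : u ≠ v := by rintro rfl; simp [cross2] at hpneg
  have hcont : ContinuousOn (fun r => cross2 (v - u) (r - u)) D := by
    simp only [cross2]; fun_prop
  obtain ⟨r, hrD, hr⟩ := hD.intermediate_value hp hq hcont ⟨hpneg.le, hqpos.le⟩
  exact disjoint_left.mp hDC hrD <| mem_of_mem_affineSpan_pair_of_mem_extremePoints hC hu hv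
    huC hvC huv (hDK hrD) (mem_affineSpan_pair_of_cross2_eq_zero huv hr)

section Polygon

variable {k : ℕ}

def ZMod.NoAlternation (S : Set (ZMod k)) : Prop :=
  ∀ (a : ZMod k) (t₁ t₂ t₃ : ℕ), 0 < t₁ → t₁ < t₂ → t₂ < t₃ → t₃ < k →
    a ∉ S → a + t₁ ∈ S → a + t₂ ∉ S → a + t₃ ∈ S → False

lemma ZMod.add_natCast_ne_add_natCast (i : ZMod k) {t s : ℕ} (ht : t < k) (hs : s < k)
    (hts : t ≠ s) : i + (t : ZMod k) ≠ i + s := by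
  rw [Ne, add_right_inj, ZMod.natCast_eq_natCast_iff', Nat.mod_eq_of_lt ht, Nat.mod_eq_of_lt hs]
  exact hts

lemma cross2_pos_of_ccw (x : ZMod k → ℝ × ℝ)
    (hccw : ∀ i j : ZMod k, j ≠ i → j ≠ i + 1 → 0 < cross2 (x (i + 1) - x i) (x j - x i))
    (i : ZMod k) {u s : ℕ} (hu : 0 < u) (hus : u < s) (hs : s < k) :
    0 < cross2 (x (i + u) - x i) (x (i + s) - x i) := by
  have hne (t₁ t₂ : ℕ) (h₁ : t₁ < k) (h₂ : t₂ < k) (h : t₁ ≠ t₂) :=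
    ZMod.add_natCast_ne_add_natCast i h₁ h₂ h
  refine cross2_pos_of_fan (fun t => x (i + t) - x i) (k - 1) (fun t ht htk => ?_)
    (fun t ht htk => ?_) u s (by omega) hus (by omega)
  · simpa using hccw i (i + t) (by simpa using hne t 0 (by omega) (by omega) (by omega))
      (by simpa using hne t 1 (by omega) (by omega) (by omega))
  · have hsucc : i + ((t + 1 : ℕ) : ZMod k) = i + t + 1 := by push_cast; ring
    have h₁ := hne 0 (t + 1) (by omega) (by omega) (by omega)
    rw [hsucc, Nat.cast_zero, add_zero] at h₁
    have h := hccw (i + t) i (by simpa using hne 0 t (by omega) (by omega) (by omega)) h₁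
    rw [← hsucc, ← cross2_sub_rotate] at h
    exact h

lemma noAlternation_of_ccw (A B : Set (ℝ × ℝ)) (x : ZMod k → ℝ × ℝ)
    (hvert : range x = (convexHull ℝ (A ∪ B)).extremePoints ℝ)
    (hccw : ∀ i j : ZMod k, j ≠ i → j ≠ i + 1 → 0 < cross2 (x (i + 1) - x i) (x j - x i))
    (hconn : IsPreconnected (convexHull ℝ A \ convexHull ℝ B)) :
    ZMod.NoAlternation {i | x i ∈ A ∧ x i ∉ convexHull ℝ B} := by
  intro a t₁ t₂ t₃ h₁ h₁₂ h₂₃ h₃ ha hb hc hd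
  have hext (j : ZMod k) : x j ∈ (convexHull ℝ (A ∪ B)).extremePoints ℝ := hvert ▸ mem_range_self j
  have hmemB (j : ZMod k) (hj : j ∉ {i | x i ∈ A ∧ x i ∉ convexHull ℝ B}) :
      x j ∈ convexHull ℝ B := by
    rcases extremePoints_convexHull_subset (hext j) with hA | hB
    · exact not_not.mp fun h => hj ⟨hA, h⟩
    · exact subset_convexHull ℝ B hB
  have hmemD (j : ZMod k) (hj : j ∈ {i | x i ∈ A ∧ x i ∉ convexHull ℝ B}) :
      x j ∈ convexHull ℝ A \ convexHull ℝ B :=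
    ⟨subset_convexHull ℝ A hj.1, hj.2⟩
  have hbneg : cross2 (x (a + t₂) - x a) (x (a + t₁) - x a) < 0 := by
    rw [cross2_comm_neg, neg_lt_zero]; exact cross2_pos_of_ccw x hccw a h₁ h₁₂ (by omega)
  exact hconn.not_straddles_chord (convex_convexHull ℝ B)
    (sdiff_subset.trans (convexHull_mono subset_union_left)) disjoint_sdiff_left (hext a)
    (hext _) (hmemB a ha) (hmemB _ hc) (hmemD _ hb) (hmemD _ hd) hbneg
    (cross2_pos_of_ccw x hccw a (by omega) h₂₃ h₃)

variable [NeZero k]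

lemma ZMod.natCast_pred_self : ((k - 1 : ℕ) : ZMod k) = -1 := by
  rw [Nat.cast_pred (Nat.pos_of_ne_zero (NeZero.ne k)), ZMod.natCast_self, zero_sub]

lemma ZMod.exists_mem_sub_one_notMem {S : Set (ZMod k)} (hne : S.Nonempty) (huniv : S ≠ univ) :
    ∃ a ∈ S, a - 1 ∉ S := by
  by_contra! h
  obtain ⟨a, ha⟩ := hne
  have hsub : ∀ n : ℕ, a - n ∈ S := by
    intro n
    induction n with
    | zero => simpa using ha
    | succ n ih => simpa [sub_add_eq_sub_sub] using h _ ih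
  exact huniv (eq_univ_of_forall fun i => by simpa using hsub (a - i).val)

lemma ZMod.NoAlternation.eq_cyclic_interval {S : Set (ZMod k)} (H : ZMod.NoAlternation S) :
    ∃ (a : ZMod k) (m : ℕ), S = {i : ZMod k | ∃ t : ℕ, t < m ∧ i = a + t} := by
  classical
  rcases S.eq_empty_or_nonempty with rfl | hne
  · exact ⟨0, 0, by simp⟩
  by_cases huniv : S = univ
  · refine ⟨0, k, huniv.trans (eq_univ_of_forall fun i => ?_).symm⟩
    exact ⟨i.val, i.val_lt, by simp⟩
  obtain ⟨a, ha, ha'⟩ := ZMod.exists_mem_sub_one_notMem hne huniv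
  have hlast : a + ((k - 1 : ℕ) : ZMod k) = a - 1 := by
    rw [ZMod.natCast_pred_self, sub_eq_add_neg]
  have hexit : ∃ t : ℕ, a + t ∉ S := ⟨k - 1, hlast ▸ ha'⟩
  refine ⟨a, Nat.find hexit, Set.ext fun i => ⟨fun hi => ?_, ?_⟩⟩
  · refine ⟨(i - a).val, ?_, by simp⟩
    by_contra! hge
    set m := Nat.find hexit
    set t := (i - a).val
    have hit : a + t = i := by simp [t]
    have hmS : a + m ∉ S := Nat.find_spec hexit
    have hm : 0 < m := Nat.pos_of_ne_zero fun h0 => hmS (by simpa [h0] using ha)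
    have htm : t ≠ m := fun h => hmS (by rwa [← h, hit])
    have htk : t ≠ k - 1 := fun h => ha' (by rwa [← hlast, ← h, hit])
    have hshift (n : ℕ) : a - 1 + ((n + 1 : ℕ) : ZMod k) = a + n := by push_cast; ring
    refine H (a - 1) 1 (m + 1) (t + 1) one_pos (by omega) (by omega)
      (by have := (i - a).val_lt; omega) ha' (by simpa using ha) ?_ ?_
    · rwa [hshift]
    · rwa [hshift, hit]
  · rintro ⟨t, ht, rfl⟩
    exact not_not.mp (Nat.find_min hexit ht)

end Polygon

theorem stmt7_general (A B : Finset (ℝ × ℝ))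
    (hconn1 : IsConnected
      (convexHull ℝ (A : Set (ℝ × ℝ)) \ convexHull ℝ (B : Set (ℝ × ℝ))))
    (hconn2 : IsConnected
      (convexHull ℝ (B : Set (ℝ × ℝ)) \ convexHull ℝ (A : Set (ℝ × ℝ))))
    (k : ℕ) (hk : 0 < k) (x : ZMod k → ℝ × ℝ)
    (hvert : Set.range x =
      Set.extremePoints ℝ (convexHull ℝ ((A : Set (ℝ × ℝ)) ∪ (B : Set (ℝ × ℝ)))))
    (hccw : ∀ i j : ZMod k, j ≠ i → j ≠ i + 1 →
      0 < cross2 (x (i + 1) - x i) (x j - x i)) :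
    (∃ (a : ZMod k) (m : ℕ),
      {i : ZMod k | x i ∈ A ∧ x i ∉ convexHull ℝ (B : Set (ℝ × ℝ))} =
        {i : ZMod k | ∃ t : ℕ, t < m ∧ i = a + (t : ZMod k)}) ∧
    (∃ (b : ZMod k) (m : ℕ),
      {i : ZMod k | x i ∈ B ∧ x i ∉ convexHull ℝ (A : Set (ℝ × ℝ))} =
        {i : ZMod k | ∃ t : ℕ, t < m ∧ i = b + (t : ZMod k)}) := by
  have : NeZero k := ⟨hk.ne'⟩
  have hvert' : range x = (convexHull ℝ ((B : Set (ℝ × ℝ)) ∪ A)).extremePoints ℝ := by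
    rwa [union_comm]
  exact ⟨(noAlternation_of_ccw A B x hvert hccw hconn1.isPreconnected).eq_cyclic_interval,
    (noAlternation_of_ccw B A x hvert' hccw hconn2.isPreconnected).eq_cyclic_interval⟩

/-- Let `A, B` be finite planar sets in general position with
neither hull contained in the other and both hull differences connected.  If
`x₀, …, x_{k−1}` (indexed by `ZMod k`) are the vertices (extreme points) of
`conv(A ∪ B)` in counterclockwise order, then the index sets
`{i | x_i ∈ A \ conv(B)}` and `{i | x_i ∈ B \ conv(A)}` are cyclic intervals. -/
theorem stmt7 (A B : Finset (ℝ × ℝ))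
    (hgen : ∀ p ∈ A ∪ B, ∀ q ∈ A ∪ B, ∀ r ∈ A ∪ B, p ≠ q → p ≠ r → q ≠ r →
      ¬ Collinear ℝ ({p, q, r} : Set (ℝ × ℝ)))
    (hAB : ¬ convexHull ℝ (A : Set (ℝ × ℝ)) ⊆ convexHull ℝ (B : Set (ℝ × ℝ)))
    (hBA : ¬ convexHull ℝ (B : Set (ℝ × ℝ)) ⊆ convexHull ℝ (A : Set (ℝ × ℝ)))
    (hconn1 : IsConnected
      (convexHull ℝ (A : Set (ℝ × ℝ)) \ convexHull ℝ (B : Set (ℝ × ℝ))))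
    (hconn2 : IsConnected
      (convexHull ℝ (B : Set (ℝ × ℝ)) \ convexHull ℝ (A : Set (ℝ × ℝ))))
    (k : ℕ) (hk : 0 < k) (x : ZMod k → ℝ × ℝ)
    (hinj : Function.Injective x)
    (hvert : Set.range x =
      Set.extremePoints ℝ (convexHull ℝ ((A : Set (ℝ × ℝ)) ∪ (B : Set (ℝ × ℝ)))))
    (hccw : ∀ i j : ZMod k, j ≠ i → j ≠ i + 1 →
      0 < cross2 (x (i + 1) - x i) (x j - x i)) :
    (∃ (a : ZMod k) (m : ℕ),
      {i : ZMod k | x i ∈ A ∧ x i ∉ convexHull ℝ (B : Set (ℝ × ℝ))} =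
        {i : ZMod k | ∃ t : ℕ, t < m ∧ i = a + (t : ZMod k)}) ∧
    (∃ (b : ZMod k) (m : ℕ),
      {i : ZMod k | x i ∈ B ∧ x i ∉ convexHull ℝ (A : Set (ℝ × ℝ))} =
        {i : ZMod k | ∃ t : ℕ, t < m ∧ i = b + (t : ZMod k)}) :=
  stmt7_general A B hconn1 hconn2 k hk x hvert hccw
end

section
/- For every n ≥ 1 there exists a set P of 3n points in general position in the plane admitting an antichain of convex pseudo-discs of cardinality C(n+1, 2) = n(n+1)/2. -/
/-!
Put `n` points on each of three rays from the origin and let `F_m` consist of the first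
`m r + 1` points of ray `r`. Since every triangle with one vertex on each ray contains the
origin, `conv F_m` is the triangle `T_m` spanned by the last point of `F_m` on each ray, `F_m` is
cut out of `P` by `T_m`, and `F_m ⊆ F_m'` iff `m ≤ m'` coordinatewise; so the `m` with a fixed
coordinate sum form an antichain of size `C(n+1, 2)`. The set `T_m \ T_m'` is the union of the
parts of `T_m` beyond the three edges of `T_m'`: each nonempty part contains a vertex of `T_m`
lying further out on its ray than the vertex of `T_m'`, and any two such vertices lie beyond a
common edge of `T_m'`, so `T_m \ T_m'` is connected. All of this only depends on the signs of
finitely many orientation determinants, which are strict for points exactly on the rays and so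
survive a small perturbation into general position.
-/

open Set Filter Topology Function MeasureTheory

section GeneralPosition

variable {E : Type*} [NormedAddCommGroup E] [NormedSpace ℝ E]

theorem affineSpan_pair_ne_top (hE : 2 ≤ Module.finrank ℝ E) (x y : E) :
    affineSpan ℝ {x, y} ≠ ⊤ := by
  intro h
  have := (collinear_iff_finrank_le_one (k := ℝ)).1 (collinear_pair ℝ x y)
  rw [← direction_affineSpan, h, AffineSubspace.direction_top, finrank_top] at this
  omega

theorem exists_dist_lt_forall_not_collinear [FiniteDimensional ℝ E]
    (hE : 2 ≤ Module.finrank ℝ E) (S : Finset E) (x : E) {δ : ℝ} (hδ : 0 < δ) :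
    ∃ y, dist y x < δ ∧ y ∉ S ∧ ∀ a ∈ S, ∀ b ∈ S, a ≠ b → ¬ Collinear ℝ {a, b, y} := by
  borelize E
  let μ : Measure E := Measure.addHaar
  set L := ⋃ a ∈ (S : Set E), ⋃ b ∈ (S : Set E), (affineSpan ℝ {a, b} : Set E)
  have hL : μ L = 0 := by
    simp only [L, measure_biUnion_null_iff S.countable_toSet]
    exact fun a _ b _ => Measure.addHaar_affineSubspace _ _ (affineSpan_pair_ne_top hE a b)
  obtain ⟨y, hyx, hyL⟩ : (Metric.ball x δ \ L).Nonempty :=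
    nonempty_of_measure_ne_zero (μ := μ) <| by
      rw [measure_sdiff_null hL]; exact (Metric.measure_ball_pos _ x hδ).ne'
  refine ⟨y, hyx, fun hy => hyL ?_, fun a ha b hb hab hcol => hyL ?_⟩
  · exact mem_biUnion hy <| mem_biUnion hy <| subset_affineSpan ℝ _ (by simp)
  · exact mem_biUnion ha <| mem_biUnion hb <|
      hcol.mem_affineSpan_of_mem_of_ne (by simp) (by simp) (by simp) hab

theorem exists_dist_lt_generalPosition [FiniteDimensional ℝ E] {ι : Type*} [DecidableEq ι]
    (hE : 2 ≤ Module.finrank ℝ E) (q : ι → E) {δ : ℝ} (hδ : 0 < δ) (s : Finset ι) :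
    ∃ p : ι → E, (∀ i, dist (p i) (q i) < δ) ∧ InjOn p s ∧
      ∀ a ∈ s, ∀ b ∈ s, ∀ c ∈ s, a ≠ b → a ≠ c → b ≠ c → ¬ Collinear ℝ {p a, p b, p c} := by
  classical
  induction s using Finset.induction_on with
  | empty => exact ⟨q, fun i => by simpa using hδ, by simp, by simp⟩
  | insert i s hi ih =>
    obtain ⟨p, hpq, hinj, hgp⟩ := ih
    obtain ⟨y, hyq, hyS, hy⟩ := exists_dist_lt_forall_not_collinear hE (s.image p) (q i) hδ
    have hp' : EqOn (update p i y) p s := fun j hj => update_of_ne (ne_of_mem_of_not_mem hj hi) _ _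
    have hy' : ∀ a ∈ s, ∀ b ∈ s, a ≠ b → ¬ Collinear ℝ {p a, p b, y} := fun a ha b hb hab =>
      hy _ (Finset.mem_image_of_mem p ha) _ (Finset.mem_image_of_mem p hb) (hinj.ne ha hb hab)
    refine ⟨update p i y, fun j => ?_, ?_, ?_⟩
    · rcases eq_or_ne j i with rfl | hj
      · simpa using hyq
      · simpa [hj] using hpq j
    · rw [Finset.coe_insert, injOn_insert (by simpa using hi), hp'.image_eq, update_self]
      exact ⟨hinj.congr hp'.symm, by simpa using hyS⟩
    · intro a ha b hb c hc hab hac hbc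
      rw [Finset.mem_insert] at ha hb hc
      rcases ha with rfl | ha <;> rcases hb with rfl | hb <;> rcases hc with rfl | hc
      · exact absurd rfl hab
      · exact absurd rfl hab
      · exact absurd rfl hac
      · rw [update_self, hp' hb, hp' hc, insert_comm, pair_comm]; exact hy' b hb c hc hbc
      · exact absurd rfl hbc
      · rw [update_self, hp' ha, hp' hc, pair_comm]; exact hy' a ha c hc hac
      · rw [update_self, hp' ha, hp' hb]; exact hy' a ha b hb hab
      · rw [hp' ha, hp' hb, hp' hc]; exact hgp a ha b hb c hc hab hac hbc

theorem dense_generalPosition [FiniteDimensional ℝ E] {ι : Type*} [Finite ι]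
    (hE : 2 ≤ Module.finrank ℝ E) :
    Dense {p : ι → E | Injective p ∧
      ∀ a b c, a ≠ b → a ≠ c → b ≠ c → ¬ Collinear ℝ {p a, p b, p c}} := by
  classical
  have := Fintype.ofFinite ι
  refine Metric.dense_iff.2 fun q δ hδ => ?_
  obtain ⟨p, hpq, hinj, hgp⟩ := exists_dist_lt_generalPosition hE q hδ Finset.univ
  exact ⟨p, (dist_pi_lt_iff hδ).2 hpq, injOn_univ.1 (by simpa using hinj),
    fun a b c => hgp a (Finset.mem_univ a) b (Finset.mem_univ b) c (Finset.mem_univ c)⟩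

end GeneralPosition

theorem isPreconnected_iUnion_of_hubs {X ι : Type*} [TopologicalSpace X] {s : ι → Set X}
    (V : Set X) (hs : ∀ i, IsPreconnected (s i)) (hV : ∀ i, (s i).Nonempty → (s i ∩ V).Nonempty)
    (hlink : ∀ v ∈ V, ∀ w ∈ V, ∃ i, v ∈ s i ∧ w ∈ s i) : IsPreconnected (⋃ i, s i) := by
  rcases (⋃ i, s i).eq_empty_or_nonempty with h | ⟨y₀, hy₀⟩
  · rw [h]; exact isPreconnected_empty
  obtain ⟨i₀, hi₀⟩ := mem_iUnion.1 hy₀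
  obtain ⟨v₀, -, hv₀⟩ := hV i₀ ⟨y₀, hi₀⟩
  refine isPreconnected_of_forall v₀ fun y hy => ?_
  obtain ⟨i, hi⟩ := mem_iUnion.1 hy
  obtain ⟨v, hvi, hv⟩ := hV i ⟨y, hi⟩
  obtain ⟨j, hv₀j, hvj⟩ := hlink v₀ hv₀ v hv
  exact ⟨s j ∪ s i, union_subset (subset_iUnion s j) (subset_iUnion s i), Or.inl hv₀j, Or.inr hi,
    (hs j).union v hvj hvi (hs i)⟩

/-- Twice the signed area of the triangle `a b c`: positive iff `a, b, c` turn counterclockwise. -/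
def orient (a b c : ℝ × ℝ) : ℝ := (b.1 - a.1) * (c.2 - a.2) - (b.2 - a.2) * (c.1 - a.1)

theorem orient_self_left (a b : ℝ × ℝ) : orient a b a = 0 := by simp [orient]

theorem orient_self_right (a b : ℝ × ℝ) : orient a b b = 0 := by simp only [orient]; ring

theorem orient_rev (a b c : ℝ × ℝ) : orient c b a = -orient a b c := by simp only [orient]; ring

theorem orient_swap_right (a b c : ℝ × ℝ) : orient a c b = -orient a b c := by
  simp only [orient]; ring

theorem orient_smul_add_smul (a b x y : ℝ × ℝ) {s t : ℝ} (h : s + t = 1) :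
    orient a b (s • x + t • y) = s * orient a b x + t * orient a b y := by
  obtain rfl : t = 1 - s := by linarith
  simp only [orient, Prod.fst_add, Prod.snd_add, Prod.smul_fst, Prod.smul_snd, smul_eq_mul]
  ring

theorem convex_orient_nonneg (a b : ℝ × ℝ) : Convex ℝ {x | 0 ≤ orient a b x} :=
  fun x hx y hy s t hs ht hst => by
    simp only [mem_ofPred_eq, orient_smul_add_smul a b x y hst] at *
    exact add_nonneg (mul_nonneg hs hx) (mul_nonneg ht hy)

theorem convex_orient_neg (a b : ℝ × ℝ) : Convex ℝ {x | orient a b x < 0} :=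
  fun x hx y hy s t hs ht hst => by
    simp only [mem_ofPred_eq, orient_smul_add_smul a b x y hst] at *
    rcases hs.lt_or_eq with hs | rfl
    · nlinarith [mul_neg_of_pos_of_neg hs hx]
    · simp_all

theorem Fin.eq_or_eq_add_one_or_eq_add_two (r s : Fin 3) : s = r ∨ s = r + 1 ∨ s = r + 2 := by
  revert r s; decide

theorem mem_convexHull_range_iff_orient_nonneg {v : Fin 3 → ℝ × ℝ}
    (hv : 0 < orient (v 0) (v 1) (v 2)) {x : ℝ × ℝ} :
    x ∈ convexHull ℝ (range v) ↔ ∀ r, 0 ≤ orient (v r) (v (r + 1)) x := by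
  set D := orient (v 0) (v 1) (v 2)
  constructor
  · refine fun hx r => convexHull_min (range_subset_iff.2 fun s => ?_) (convex_orient_nonneg _ _) hx
    obtain rfl | rfl | rfl := Fin.eq_or_eq_add_one_or_eq_add_two r s
    · exact (orient_self_left _ _).ge
    · exact (orient_self_right _ _).ge
    · have hrot : orient (v r) (v (r + 1)) (v (r + 2)) = D := by
        fin_cases r <;> simp [D, orient] <;> ring
      simpa only [mem_ofPred_eq, hrot] using hv.le
  · intro hx
    -- barycentric coordinates of `x`
    have hsum : ∑ r, orient (v (r + 1)) (v (r + 2)) x = D := by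
      simp [Fin.sum_univ_three, D, orient]; ring
    have hcomb : ∑ r, orient (v (r + 1)) (v (r + 2)) x • v r = D • x := by
      simp only [Fin.sum_univ_three]
      ext <;> simp [D, orient] <;> ring
    have hw : ∀ r, 0 ≤ orient (v (r + 1)) (v (r + 2)) x / D := fun r =>
      div_nonneg (by simpa [add_assoc] using hx (r + 1)) hv.le
    convert (convex_convexHull ℝ (range v)).sum_mem (fun r _ => hw r)
      (by rw [← Finset.sum_div, hsum, div_self hv.ne'])
      fun r _ => subset_convexHull ℝ _ (mem_range_self r)
    simp only [div_eq_inv_mul, mul_smul, ← Finset.smul_sum, hcomb, inv_smul_smul₀ hv.ne']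

open Finset in
theorem card_filter_sum_val_eq_choose (k N : ℕ) :
    #{m : Fin k → Fin (N + 1) | ∑ r, (m r : ℕ) = N} = (k + N - 1).choose N := by
  classical
  have himage : ({m : Fin k → Fin (N + 1) | ∑ r, (m r : ℕ) = N} : Finset _).image
      (fun m r => (m r : ℕ)) = Finset.piAntidiag Finset.univ N := by
    ext f
    simp only [Finset.mem_image, Finset.mem_filter, Finset.mem_univ, true_and,
      Finset.mem_piAntidiag, ne_eq, implies_true, and_true]
    refine ⟨fun ⟨m, hm, hf⟩ => hf ▸ hm, fun hf => ⟨fun r => ⟨f r, ?_⟩, by simpa using hf, rfl⟩⟩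
    exact Nat.lt_succ_of_le <|
      hf ▸ Finset.single_le_sum (fun _ _ => Nat.zero_le _) (Finset.mem_univ r)
  rw [← Finset.card_image_of_injective _ fun m m' h => funext fun r => Fin.ext (congrFun h r),
    himage, ← Finset.map_sym_eq_piAntidiag, Finset.card_map, Finset.sym_univ, Finset.card_univ,
    Sym.card_sym_eq_choose, Fintype.card_fin]

theorem eq_of_le_of_sum_val_eq {ι : Type*} [Fintype ι] {k : ℕ} {m m' : ι → Fin k} (hle : m ≤ m')
    (hsum : ∑ r, (m r : ℕ) = ∑ r, (m' r : ℕ)) : m = m' :=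
  funext fun r => Fin.ext <|
    (Finset.sum_eq_sum_iff_of_le fun r _ => Fin.le_iff_val_le_val.1 (hle r)).1 hsum r
      (Finset.mem_univ r)

/-- The paper's three rays at mutual angles of 120°, mapped by a linear map to rays with
rational directions; consecutive directions have cross product `1`. -/
def rayDir : Fin 3 → ℝ × ℝ := ![(1, 0), (0, 1), (-1, -1)]

theorem orient_smul_rayDir_self (r : Fin 3) (s t u : ℝ) :
    orient (s • rayDir r) (t • rayDir (r + 1)) (u • rayDir r) = t * (s - u) := by
  fin_cases r <;> simp [orient, rayDir] <;> ring

theorem orient_smul_rayDir_add_one (r : Fin 3) (s t u : ℝ) :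
    orient (s • rayDir r) (t • rayDir (r + 1)) (u • rayDir (r + 1)) = s * (t - u) := by
  fin_cases r <;> simp [orient, rayDir] <;> ring

theorem orient_smul_rayDir_add_two (r : Fin 3) (s t u : ℝ) :
    orient (s • rayDir r) (t • rayDir (r + 1)) (u • rayDir (r + 2)) = s * t + t * u + u * s := by
  fin_cases r <;> simp [orient, rayDir] <;> ring

section Tripod

variable {n : ℕ}

/-- `p (r, i)` is the `i`-th point on ray `r`, counted from the centre: triangles with one vertex
on each ray are counterclockwise, and the earlier points of both rays of an edge
`p (r, i)`, `p (r + 1, j)` lie to its left. -/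
structure IsTripod (p : Fin 3 × Fin n → ℝ × ℝ) : Prop where
  transversal : ∀ r i j k, 0 < orient (p (r, i)) (p (r + 1, j)) (p (r + 2, k))
  first_pos : ∀ r i j i', i' < i → 0 < orient (p (r, i)) (p (r + 1, j)) (p (r, i'))
  second_pos : ∀ r i j j', j' < j → 0 < orient (p (r, i)) (p (r + 1, j)) (p (r + 1, j'))

theorem isTripod_smul_rayDir (n : ℕ) :
    IsTripod fun x : Fin 3 × Fin n => ((x.2 : ℝ) + 1) • rayDir x.1 where
  transversal r i j k := by rw [orient_smul_rayDir_add_two]; positivity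
  first_pos r i j i' h := by
    rw [orient_smul_rayDir_self]
    exact mul_pos (by positivity) (by simpa using h)
  second_pos r i j j' h := by
    rw [orient_smul_rayDir_add_one]
    exact mul_pos (by positivity) (by simpa using h)

theorem IsTripod.eventually {q : Fin 3 × Fin n → ℝ × ℝ} (hq : IsTripod q) :
    ∀ᶠ p in 𝓝 q, IsTripod p := by
  have pos : ∀ {a b c}, 0 < orient (q a) (q b) (q c) →
      ∀ᶠ p in 𝓝 q, 0 < orient (p a) (p b) (p c) := fun {a b c} h =>
    ((by unfold orient; fun_prop : Continuous fun p : Fin 3 × Fin n → ℝ × ℝ =>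
      orient (p a) (p b) (p c)).tendsto q).eventually_const_lt h
  have h₁ := eventually_all.2 fun r => eventually_all.2 fun i => eventually_all.2 fun j =>
    eventually_all.2 fun k => pos (hq.transversal r i j k)
  have h₂ := eventually_all.2 fun r => eventually_all.2 fun i => eventually_all.2 fun j =>
    eventually_all.2 fun i' => eventually_imp_distrib_left.2 fun h => pos (hq.first_pos r i j i' h)
  have h₃ := eventually_all.2 fun r => eventually_all.2 fun i => eventually_all.2 fun j =>
    eventually_all.2 fun j' => eventually_imp_distrib_left.2 fun h => pos (hq.second_pos r i j j' h)
  filter_upwards [h₁, h₂, h₃] with p h₁ h₂ h₃ using ⟨h₁, h₂, h₃⟩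

theorem exists_isTripod_generalPosition (n : ℕ) :
    ∃ p : Fin 3 × Fin n → ℝ × ℝ, IsTripod p ∧ Injective p ∧
      ∀ a b c, a ≠ b → a ≠ c → b ≠ c → ¬ Collinear ℝ {p a, p b, p c} := by
  obtain ⟨p, hgp, hp⟩ := (dense_generalPosition (by simp)).inter_nhds_nonempty
    (isTripod_smul_rayDir n).eventually
  exact ⟨p, hp, hgp⟩

def triangle (p : Fin 3 × Fin n → ℝ × ℝ) (m : Fin 3 → Fin n) : Set (ℝ × ℝ) :=
  convexHull ℝ (range fun r => p (r, m r))

/-- The set `F_{jkl}` of the paper: the first `m r + 1` points on each ray `r`. -/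
noncomputable def prefixSet (p : Fin 3 × Fin n → ℝ × ℝ) (m : Fin 3 → Fin n) : Finset (ℝ × ℝ) :=
  (Finset.univ.filter fun x : Fin 3 × Fin n => x.2 ≤ m x.1).image p

theorem prefixSet_subset_prefixSet_iff {p : Fin 3 × Fin n → ℝ × ℝ} (hp : Injective p)
    {m m' : Fin 3 → Fin n} : prefixSet p m ⊆ prefixSet p m' ↔ m ≤ m' := by
  constructor
  · intro h r
    obtain ⟨x, hx, hxr⟩ := Finset.mem_image.1 <| h <| Finset.mem_image_of_mem p <|
      Finset.mem_filter.2 ⟨Finset.mem_univ (r, m r), le_rfl⟩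
    obtain rfl := hp hxr
    exact (Finset.mem_filter.1 hx).2
  · intro h
    refine Finset.image_subset_image fun x hx => ?_
    simp only [Finset.mem_filter, Finset.mem_univ, true_and] at hx ⊢
    exact hx.trans (h x.1)

theorem prefixSet_injective {p : Fin 3 × Fin n → ℝ × ℝ} (hp : Injective p) :
    Injective (prefixSet p) := fun _ _ h =>
  le_antisymm ((prefixSet_subset_prefixSet_iff hp).1 h.le)
    ((prefixSet_subset_prefixSet_iff hp).1 h.ge)

namespace IsTripod

variable {p : Fin 3 × Fin n → ℝ × ℝ}

theorem orient_nonneg (hp : IsTripod p) (m : Fin 3 → Fin n) (r s : Fin 3) {i : Fin n}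
    (hi : i ≤ m s) : 0 ≤ orient (p (r, m r)) (p (r + 1, m (r + 1))) (p (s, i)) := by
  obtain rfl | rfl | rfl := Fin.eq_or_eq_add_one_or_eq_add_two r s
  · rcases hi.lt_or_eq with hi | rfl
    · exact (hp.first_pos _ _ _ _ hi).le
    · exact (orient_self_left _ _).ge
  · rcases hi.lt_or_eq with hi | rfl
    · exact (hp.second_pos _ _ _ _ hi).le
    · exact (orient_self_right _ _).ge
  · exact (hp.transversal _ _ _ _).le

theorem orient_neg (hp : IsTripod p) (m : Fin 3 → Fin n) {r s : Fin 3} (hs : s ≠ r + 2)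
    {i : Fin n} (hi : m s < i) : orient (p (r, m r)) (p (r + 1, m (r + 1))) (p (s, i)) < 0 := by
  obtain rfl | rfl | rfl := Fin.eq_or_eq_add_one_or_eq_add_two r s
  · have := hp.first_pos s i (m (s + 1)) (m s) hi
    rw [orient_rev] at this
    linarith
  · have := hp.second_pos r (m r) i (m (r + 1)) hi
    rw [orient_swap_right] at this
    linarith
  · exact absurd rfl hs

theorem mem_triangle_iff (hp : IsTripod p) (m : Fin 3 → Fin n) {x : ℝ × ℝ} :
    x ∈ triangle p m ↔ ∀ r, 0 ≤ orient (p (r, m r)) (p (r + 1, m (r + 1))) x :=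
  mem_convexHull_range_iff_orient_nonneg (hp.transversal 0 (m 0) (m 1) (m 2))

theorem apply_mem_triangle_iff (hp : IsTripod p) (m : Fin 3 → Fin n) {s : Fin 3} {i : Fin n} :
    p (s, i) ∈ triangle p m ↔ i ≤ m s := by
  refine ⟨fun h => not_lt.1 fun hi => ?_, fun hi => (hp.mem_triangle_iff m).2 fun r =>
    hp.orient_nonneg m r s hi⟩
  have hs : s ≠ s + 2 := by fin_cases s <;> decide
  exact (hp.orient_neg m hs hi).not_ge ((hp.mem_triangle_iff m).1 h s)

theorem coe_prefixSet (hp : IsTripod p) (m : Fin 3 → Fin n) :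
    (prefixSet p m : Set (ℝ × ℝ)) = range p ∩ triangle p m := by
  ext y
  simp only [prefixSet, Finset.coe_image, Finset.coe_filter, Finset.mem_univ, true_and, mem_image,
    mem_ofPred_eq, mem_inter_iff, mem_range]
  constructor
  · rintro ⟨⟨s, i⟩, hi, rfl⟩
    exact ⟨⟨_, rfl⟩, (hp.apply_mem_triangle_iff m).2 hi⟩
  · rintro ⟨⟨⟨s, i⟩, rfl⟩, hi⟩
    exact ⟨_, (hp.apply_mem_triangle_iff m).1 hi, rfl⟩

theorem convexHull_prefixSet (hp : IsTripod p) (m : Fin 3 → Fin n) :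
    convexHull ℝ (prefixSet p m : Set (ℝ × ℝ)) = triangle p m := by
  rw [hp.coe_prefixSet]
  refine (convexHull_min inter_subset_right (convex_convexHull ℝ _)).antisymm (convexHull_mono ?_)
  rintro _ ⟨r, rfl⟩
  exact ⟨mem_range_self _, subset_convexHull ℝ _ (mem_range_self r)⟩

theorem isPreconnected_triangle_diff (hp : IsTripod p) (m m' : Fin 3 → Fin n) :
    IsPreconnected (triangle p m \ triangle p m') := by
  set N : Fin 3 → Set (ℝ × ℝ) := fun r =>
    triangle p m ∩ {x | orient (p (r, m' r)) (p (r + 1, m' (r + 1))) x < 0}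
  have hN : triangle p m \ triangle p m' = ⋃ r, N r := by
    ext x
    simp [N, hp.mem_triangle_iff m']
  have hvert : ∀ s, p (s, m s) ∈ triangle p m := fun s => subset_convexHull ℝ _ (mem_range_self s)
  rw [hN]
  refine isPreconnected_iUnion_of_hubs {x | ∃ s, m' s < m s ∧ p (s, m s) = x}
    (fun r => ((convex_convexHull ℝ _).inter (convex_orient_neg _ _)).isPreconnected) ?_ ?_
  · rintro r ⟨x, hxT, hx : orient _ _ x < 0⟩
    obtain ⟨s, hs⟩ : ∃ s, orient (p (r, m' r)) (p (r + 1, m' (r + 1))) (p (s, m s)) < 0 := by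
      by_contra! h
      have hT : triangle p m ⊆ {x | 0 ≤ orient (p (r, m' r)) (p (r + 1, m' (r + 1))) x} :=
        convexHull_min (range_subset_iff.2 h) (convex_orient_nonneg _ _)
      exact hx.not_ge (hT hxT :)
    exact ⟨p (s, m s), ⟨hvert s, hs⟩, s,
      not_le.1 fun hle => hs.not_ge (hp.orient_nonneg m' r s hle), rfl⟩
  · rintro _ ⟨s, hs, rfl⟩ _ ⟨s', hs', rfl⟩
    obtain ⟨r, hr, hr'⟩ : ∃ r : Fin 3, s ≠ r + 2 ∧ s' ≠ r + 2 := by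
      fin_cases s <;> fin_cases s' <;> decide
    exact ⟨r, ⟨hvert s, hp.orient_neg m' hr hs⟩, ⟨hvert s', hp.orient_neg m' hr' hs'⟩⟩

end IsTripod

end Tripod

/-- For every `n ≥ 1` there is a set `P` of `3n` points in general
position in the plane admitting an antichain of convex pseudo-discs of
cardinality `C(n+1,2) = n(n+1)/2`. -/
theorem stmt11 (n : ℕ) (hn : 1 ≤ n) :
    ∃ P : Finset (ℝ × ℝ), P.card = 3 * n ∧
      (∀ p ∈ P, ∀ q ∈ P, ∀ r ∈ P, p ≠ q → p ≠ r → q ≠ r →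
        ¬ Collinear ℝ ({p, q, r} : Set (ℝ × ℝ))) ∧
      ∃ F : Finset (Finset (ℝ × ℝ)),
        (∀ A ∈ F, ∃ C : Set (ℝ × ℝ), Convex ℝ C ∧
          (A : Set (ℝ × ℝ)) = ↑P ∩ C) ∧
        (∀ A ∈ F, ∀ B ∈ F, A ≠ B →
          IsPreconnected (convexHull ℝ (A : Set (ℝ × ℝ)) \ convexHull ℝ (B : Set (ℝ × ℝ))) ∧
          IsPreconnected (convexHull ℝ (B : Set (ℝ × ℝ)) \ convexHull ℝ (A : Set (ℝ × ℝ)))) ∧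
        (∀ A ∈ F, ∀ B ∈ F, A ⊆ B → A = B) ∧
        F.card = (n + 1).choose 2 := by
  classical
  obtain ⟨N, rfl⟩ : ∃ N, n = N + 1 := ⟨n - 1, by omega⟩
  obtain ⟨p, hp, hinj, hgp⟩ := exists_isTripod_generalPosition (N + 1)
  -- `j + k + l = n + 2` in the paper, with `(j, k, l) = (m 0 + 1, m 1 + 1, m 2 + 1)`
  set M := Finset.univ.filter fun m : Fin 3 → Fin (N + 1) => ∑ r, (m r : ℕ) = N
  refine ⟨Finset.univ.image p, ?_, ?_, M.image (prefixSet p), ?_, ?_, ?_, ?_⟩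
  · simp [Finset.card_image_of_injective _ hinj]
  · simp only [Finset.mem_image, Finset.mem_univ, true_and, forall_exists_index,
      forall_apply_eq_imp_iff]
    exact fun a b c hab hac hbc =>
      hgp a b c (ne_of_apply_ne p hab) (ne_of_apply_ne p hac) (ne_of_apply_ne p hbc)
  · simp only [Finset.mem_image, forall_exists_index, and_imp, forall_apply_eq_imp_iff₂]
    exact fun m _ => ⟨triangle p m, convex_convexHull ℝ _, by simp [hp.coe_prefixSet]⟩
  · simp only [Finset.mem_image, forall_exists_index, and_imp, forall_apply_eq_imp_iff₂]
    intro m _ m' _ _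
    rw [hp.convexHull_prefixSet, hp.convexHull_prefixSet]
    exact ⟨hp.isPreconnected_triangle_diff m m', hp.isPreconnected_triangle_diff m' m⟩
  · simp only [Finset.mem_image, forall_exists_index, and_imp, forall_apply_eq_imp_iff₂]
    intro m hm m' hm' h
    simp only [M, Finset.mem_filter, Finset.mem_univ, true_and] at hm hm'
    rw [eq_of_le_of_sum_val_eq ((prefixSet_subset_prefixSet_iff hinj).1 h) (hm.trans hm'.symm)]
  · rw [Finset.card_image_of_injective _ (prefixSet_injective hinj), card_filter_sum_val_eq_choose,
      show 3 + N - 1 = N + 2 by omega]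
    exact Nat.choose_symm_add
end

section
/- Let F be an antichain (under inclusion) of linearly separable subsets of a set P of n points in general position in the plane. Then |F| ≤ 4·C(n,2) + 1 = 2n(n−1) + 1. -/
/-!
Every nonempty proper cut `A = P ∩ H` is described by an ordered pair of distinct points of `P`
and one bit. Take the pivot `p ∈ A` extremal in the direction of `H` and rotate the boundary line
of `H` about `p` until it first meets another point `q`; by general position nothing else lies on
the line `pq`, so `A` is the open side of `pq` containing `A \ {p, q}`, together with `p` and
possibly `q`. The direction of rotation fixes the orientation of `pq` in terms of `q ∈ A`, which
leaves `2·n(n-1) = 4·C(n,2)` possible cuts. The trivial cuts `∅ ⊆ P` contribute at most one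
member to an antichain.
-/

open Finset

namespace Planar

def cross (a b : ℝ × ℝ) : ℝ := a.1 * b.2 - a.2 * b.1

/-- Positive iff `x` lies strictly left of the directed line `p → q`. -/
def orient (p q x : ℝ × ℝ) : ℝ := cross (q - p) (x - p)

/-- Coordinates of `y` in the orthogonal basis `(u, u⊥)`, each scaled by `|u|²`. -/
def frame (u y : ℝ × ℝ) : ℝ × ℝ := (u.1 * y.1 + u.2 * y.2, cross u y)

lemma orient_swap (p q x : ℝ × ℝ) : orient q p x = -orient p q x := by
  simp only [orient, cross, Prod.fst_sub, Prod.snd_sub]; ring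

lemma cross_frame (u a b : ℝ × ℝ) :
    cross (frame u a) (frame u b) = (u.1 ^ 2 + u.2 ^ 2) * cross a b := by
  simp only [frame, cross]; ring

lemma frame_sub (u a b : ℝ × ℝ) : frame u (a - b) = frame u a - frame u b := by
  ext <;> simp only [frame, cross, Prod.fst_sub, Prod.snd_sub] <;> ring

lemma sq_add_sq_pos {u : ℝ × ℝ} (hu : u ≠ 0) : 0 < u.1 ^ 2 + u.2 ^ 2 := by
  by_contra! h
  have h1 := sq_nonneg u.1
  have h2 := sq_nonneg u.2
  exact hu (Prod.ext (pow_eq_zero_iff two_ne_zero |>.mp (by linarith))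
    (pow_eq_zero_iff two_ne_zero |>.mp (by linarith)))

lemma frame_ne_zero {u y : ℝ × ℝ} (hu : u ≠ 0) (hy : y ≠ 0) : frame u y ≠ 0 := by
  intro h
  have h1 : (frame u y).1 = 0 := congrArg Prod.fst h
  have h2 : (frame u y).2 = 0 := congrArg Prod.snd h
  simp only [frame, cross] at h1 h2
  have hu2 := (sq_add_sq_pos hu).ne'
  refine hy (Prod.ext ?_ ?_)
  · exact (mul_eq_zero.mp (by linear_combination u.1 * h1 - u.2 * h2 :
      (u.1 ^ 2 + u.2 ^ 2) * y.1 = 0)).resolve_left hu2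
  · exact (mul_eq_zero.mp (by linear_combination u.2 * h1 + u.1 * h2 :
      (u.1 ^ 2 + u.2 ^ 2) * y.2 = 0)).resolve_left hu2

lemma collinear_of_orient_eq_zero {p q x : ℝ × ℝ} (h : orient p q x = 0) :
    Collinear ℝ ({p, q, x} : Set (ℝ × ℝ)) := by
  by_cases hpq : p = q
  · subst hpq
    simpa using collinear_pair ℝ p x
  have hn := sq_add_sq_pos (sub_ne_zero.mpr (Ne.symm hpq))
  set t := ((q.1 - p.1) * (x.1 - p.1) + (q.2 - p.2) * (x.2 - p.2)) /
    ((q - p).1 ^ 2 + (q - p).2 ^ 2)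
  have hx : AffineMap.lineMap p q t = x := by
    simp only [orient, cross, Prod.fst_sub, Prod.snd_sub] at h hn
    rw [AffineMap.lineMap_apply]
    ext
    · simp only [t, vadd_eq_add, vsub_eq_sub, Prod.fst_add, Prod.smul_fst, Prod.fst_sub,
        Prod.snd_sub, smul_eq_mul]
      field_simp
      linear_combination (q.2 - p.2) * h
    · simp only [t, vadd_eq_add, vsub_eq_sub, Prod.snd_add, Prod.smul_snd, Prod.fst_sub,
        Prod.snd_sub, smul_eq_mul]
      field_simp
      linear_combination -(q.1 - p.1) * h
  have := collinear_insert_of_mem_affineSpan_pair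
    (hx ▸ AffineMap.lineMap_mem_affineSpan_pair t p q)
  rwa [Set.insert_comm, Set.pair_comm] at this

lemma toLex_lt_zero_iff {α β : Type*} [LT α] [LT β] [Zero α] [Zero β] (a : α × β) :
    toLex a < 0 ↔ a.1 < 0 ∨ a.1 = 0 ∧ a.2 < 0 := by
  rw [← toLex_zero, Prod.Lex.toLex_lt_toLex]; rfl

/-- The rotation step, in the frame of the pivot: `k` maximises the slope `-(y k).2 / (y k).1`,
so the line through `y k` is the first one met when rotating the vertical line. -/
lemma exists_line_splitting_lexNeg {ι : Type*} (s : Finset ι) (y : ι → ℝ × ℝ)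
    (hpar : ∀ i ∈ s, ∀ j ∈ s, i ≠ j → cross (y i) (y j) ≠ 0)
    (hne : ∃ i ∈ s, (y i).1 ≠ 0) :
    ∃ k ∈ s, (y k).1 ≠ 0 ∧ ∀ i ∈ s, i ≠ k →
      ((y k).1 * cross (y k) (y i) < 0 ↔ toLex (y i) < 0) := by
  classical
  set slope : ι → ℝ := fun i => -(y i).2 / (y i).1
  obtain ⟨i₀, hi₀, hi₀'⟩ := hne
  obtain ⟨k, hk, hmax⟩ := (s.filter fun i => (y i).1 ≠ 0).exists_max_image slope
    ⟨i₀, mem_filter.mpr ⟨hi₀, hi₀'⟩⟩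
  obtain ⟨hks, hk0⟩ := mem_filter.mp hk
  refine ⟨k, hks, hk0, fun i hi hik => ?_⟩
  have hk2 : 0 < (y k).1 ^ 2 := by positivity
  rw [toLex_lt_zero_iff]
  by_cases hi0 : (y i).1 = 0
  · have h : (y k).1 * cross (y k) (y i) = (y k).1 ^ 2 * (y i).2 := by
      simp only [cross, hi0]; ring
    rw [h, mul_neg_iff]
    simp [hi0, hk2, hk2.not_gt]
  · have hcross : cross (y k) (y i) = (y k).1 * (y i).1 * (slope k - slope i) := by
      simp only [slope, cross]; field_simp; ring
    have hlt : slope i < slope k := by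
      refine lt_of_le_of_ne (hmax i (mem_filter.mpr ⟨hi, hi0⟩)) fun h => ?_
      exact hpar k hks i hi (Ne.symm hik) (by rw [hcross, h, sub_self, mul_zero])
    have h : (y k).1 * cross (y k) (y i) = (y k).1 ^ 2 * (slope k - slope i) * (y i).1 := by
      rw [hcross]; ring
    rw [h, mul_neg_iff]
    simp [hi0, mul_pos hk2 (sub_pos.mpr hlt), (mul_pos hk2 (sub_pos.mpr hlt)).not_gt]

/-- Choosing the pivot lexicographically extremal, rather than just extremal along `u`, places any
point of `A` on the boundary line strictly below the pivot in the second coordinate. -/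
lemma exists_lexMax_pivot {P A : Finset (ℝ × ℝ)} {u : ℝ × ℝ} (hu : u ≠ 0) {c : ℝ}
    (hA : A = P.filter fun x => u.1 * x.1 + u.2 * x.2 ≤ c) (hne : A.Nonempty) :
    ∃ p ∈ A, ∀ x ∈ P, x ≠ p → (x ∈ A ↔ toLex (frame u (x - p)) < 0) := by
  subst hA
  obtain ⟨p, hpA, hmax⟩ := exists_max_image _ (fun x => toLex (frame u x)) hne
  refine ⟨p, hpA, fun x hx hxp => ?_⟩
  have hp : (frame u p).1 ≤ c := (mem_filter.mp hpA).2
  have hfr : frame u x ≠ frame u p := by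
    rw [← sub_ne_zero, ← frame_sub]; exact frame_ne_zero hu (sub_ne_zero.mpr hxp)
  rw [frame_sub, toLex_lt_zero_iff]
  constructor
  · intro hxA
    have hlt := lt_of_le_of_ne (hmax x hxA) (toLex.injective.ne hfr)
    rw [Prod.Lex.toLex_lt_toLex] at hlt
    simp only [Prod.fst_sub, Prod.snd_sub, sub_neg, sub_eq_zero]
    exact hlt
  · intro h
    by_contra hxA
    have hx' : c < (frame u x).1 := by
      by_contra! hle; exact hxA (mem_filter.mpr ⟨hx, hle⟩)
    simp only [Prod.fst_sub, Prod.snd_sub, sub_neg, sub_eq_zero] at h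
    rcases h with h | h
    · linarith
    · linarith [h.1]

noncomputable def halfPlaneCut (P : Finset (ℝ × ℝ)) (a b : ℝ × ℝ) (closed : Bool) :
    Finset (ℝ × ℝ) :=
  P.filter fun x => 0 < orient a b x ∨ x = b ∨ (closed ∧ x = a)

lemma halfPlaneCut_eq {P A : Finset (ℝ × ℝ)} {a b : ℝ × ℝ} {closed : Bool} (hAP : A ⊆ P)
    (ha : a ∈ A ↔ closed) (hb : b ∈ A)
    (hside : ∀ x ∈ P, x ≠ a → x ≠ b → (x ∈ A ↔ 0 < orient a b x)) :
    halfPlaneCut P a b closed = A := by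
  ext x
  simp only [halfPlaneCut, mem_filter]
  by_cases hxb : x = b
  · subst hxb; simp [hb, hAP hb]
  by_cases hxa : x = a
  · subst hxa
    have h0 : orient x b x = 0 := by
      simp only [orient, cross, sub_self, Prod.fst_zero, Prod.snd_zero]; ring
    simp only [h0, lt_self_iff_false, hxb, and_true, false_or, ← ha]
    exact and_iff_right_of_imp fun h => hAP h
  by_cases hx : x ∈ P
  · simp [hx, hxa, hxb, hside x hx hxa hxb]
  · simpa [hx] using fun h => hx (hAP h)

lemma exists_halfPlaneCut_eq {P A : Finset (ℝ × ℝ)}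
    (hgen : ∀ p ∈ P, ∀ q ∈ P, ∀ r ∈ P, p ≠ q → p ≠ r → q ≠ r →
      ¬ Collinear ℝ ({p, q, r} : Set (ℝ × ℝ)))
    {u : ℝ × ℝ} (hu : u ≠ 0) {c : ℝ} (hA : A = P.filter fun x => u.1 * x.1 + u.2 * x.2 ≤ c)
    (hne : A.Nonempty) (hAP : A ≠ P) :
    ∃ t ∈ P.offDiag ×ˢ (univ : Finset Bool), halfPlaneCut P t.1.1 t.1.2 t.2 = A := by
  have hsub : A ⊆ P := hA ▸ filter_subset _ _
  obtain ⟨p, hpA, hpivot⟩ := exists_lexMax_pivot hu hA hne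
  have hpP := hsub hpA
  set y : ℝ × ℝ → ℝ × ℝ := fun x => frame u (x - p)
  have hpar : ∀ i ∈ P.erase p, ∀ j ∈ P.erase p, i ≠ j → cross (y i) (y j) ≠ 0 := by
    intro i hi j hj hij
    obtain ⟨hip, hiP⟩ := mem_erase.mp hi
    obtain ⟨hjp, hjP⟩ := mem_erase.mp hj
    show cross (frame u (i - p)) (frame u (j - p)) ≠ 0
    rw [cross_frame]
    refine mul_ne_zero (sq_add_sq_pos hu).ne' fun h => ?_
    exact hgen p hpP i hiP j hjP (Ne.symm hip) (Ne.symm hjp) hij (collinear_of_orient_eq_zero h)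
  have hout : ∃ x ∈ P.erase p, (y x).1 ≠ 0 := by
    obtain ⟨z, hzP, hzA⟩ := not_subset.mp fun h => hAP (Subset.antisymm hsub h)
    refine ⟨z, mem_erase.mpr ⟨fun h => hzA (h ▸ hpA), hzP⟩, fun hz => hzA ?_⟩
    have hp : (frame u p).1 ≤ c := by rw [hA] at hpA; exact (mem_filter.mp hpA).2
    rw [hA, mem_filter]
    refine ⟨hzP, ?_⟩
    simp only [y, frame_sub, Prod.fst_sub, sub_eq_zero] at hz
    exact hz.trans_le hp
  obtain ⟨q, hq, hq0, hsplit⟩ := exists_line_splitting_lexNeg (P.erase p) y hpar hout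
  obtain ⟨hqp, hqP⟩ := mem_erase.mp hq
  have hside : ∀ x ∈ P, x ≠ p → x ≠ q → (x ∈ A ↔ (y q).1 * orient p q x < 0) := by
    intro x hx hxp hxq
    rw [hpivot x hx hxp, ← hsplit x (mem_erase.mpr ⟨hxp, hx⟩) hxq, cross_frame, mul_left_comm,
      mul_neg_iff]
    have hu2 := sq_add_sq_pos hu
    simp [hu2, hu2.not_gt, orient]
  have hqA : q ∈ A ↔ (y q).1 < 0 := by
    rw [hpivot q hqP hqp, toLex_lt_zero_iff]
    exact or_iff_left fun h => hq0 h.1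
  rcases hq0.lt_or_gt with hneg | hpos
  · refine ⟨((p, q), true), by simp [hpP, hqP, Ne.symm hqp], ?_⟩
    refine halfPlaneCut_eq hsub (by simp [hpA]) (hqA.mpr hneg) fun x hx hxp hxq => ?_
    rw [hside x hx hxp hxq, mul_neg_iff]
    simp [hneg, hneg.not_gt]
  · refine ⟨((q, p), false), by simp [hpP, hqP, hqp], ?_⟩
    refine halfPlaneCut_eq hsub (by simp [hqA, hpos.le]) hpA fun x hx hxq hxp => ?_
    rw [hside x hx hxp hxq, mul_neg_iff, orient_swap]
    simp [hpos, hpos.not_gt]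

end Planar

lemma Finset.card_inter_pair_le_one_of_antichain {α : Type*} [PartialOrder α] [DecidableEq α]
    {F : Finset α} (hanti : ∀ A ∈ F, ∀ B ∈ F, A ≤ B → A = B) {a b : α} (hab : a ≤ b) :
    #(F ∩ {a, b}) ≤ 1 := by
  refine card_le_one.mpr fun A hA B hB => ?_
  simp only [mem_inter, mem_insert, mem_singleton] at hA hB
  obtain ⟨hAF, rfl | rfl⟩ := hA <;> obtain ⟨hBF, rfl | rfl⟩ := hB
  · rfl
  · exact hanti A hAF B hBF hab
  · exact (hanti B hBF A hAF hab).symm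
  · rfl

lemma Finset.card_offDiag_mul_two {α : Type*} [DecidableEq α] (s : Finset α) :
    #s.offDiag * 2 = 4 * (#s).choose 2 := by
  obtain ⟨k, hk⟩ := Nat.even_mul_pred_self #s
  rw [offDiag_card, Nat.choose_two_right, ← Nat.mul_sub_one, hk]
  omega

/-- An antichain `F` of linearly separable subsets of a set `P`
of `n` points in general position (no three collinear) in the plane has at most
`4·C(n,2) + 1` members. -/
theorem stmt16 (n : ℕ) (P : Finset (ℝ × ℝ)) (hcard : P.card = n)
    (hgen : ∀ p ∈ P, ∀ q ∈ P, ∀ r ∈ P, p ≠ q → p ≠ r → q ≠ r →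
      ¬ Collinear ℝ ({p, q, r} : Set (ℝ × ℝ)))
    (F : Finset (Finset (ℝ × ℝ)))
    (hsep : ∀ A ∈ F, ∃ u : ℝ × ℝ, u ≠ 0 ∧ ∃ c : ℝ,
      A = P.filter (fun p => u.1 * p.1 + u.2 * p.2 ≤ c))
    (hanti : ∀ A ∈ F, ∀ B ∈ F, A ⊆ B → A = B) :
    F.card ≤ 4 * n.choose 2 + 1 := by
  have hcut : F \ {∅, P} ⊆
      (P.offDiag ×ˢ univ).image fun t => Planar.halfPlaneCut P t.1.1 t.1.2 t.2 := by
    intro A hA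
    obtain ⟨hAF, hA'⟩ := mem_sdiff.mp hA
    simp only [mem_insert, mem_singleton, not_or] at hA'
    obtain ⟨u, hu, c, hAc⟩ := hsep A hAF
    obtain ⟨t, ht, htA⟩ :=
      Planar.exists_halfPlaneCut_eq hgen hu hAc (nonempty_iff_ne_empty.mpr hA'.1) hA'.2
    exact mem_image.mpr ⟨t, ht, htA⟩
  calc #F = #(F ∩ {∅, P}) + #(F \ {∅, P}) := (card_inter_add_card_sdiff F _).symm
    _ ≤ 1 + #(P.offDiag ×ˢ (univ : Finset Bool)) :=
      add_le_add (card_inter_pair_le_one_of_antichain hanti (empty_subset P))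
        ((card_le_card hcut).trans card_image_le)
    _ = 4 * n.choose 2 + 1 := by
      rw [card_product, card_univ, Fintype.card_bool, card_offDiag_mul_two, hcard, add_comm]
end
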